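/- For a symmetric n×n matrix A with eigenvalues μ and μ₀ ∈ ℝ, trace(T_k^∞(μ₀, A)) = (n−k) σ_k^∞(μ₀, μ) + μ₀ σ_{k−1}^∞(μ₀, μ). -/
import Mathlib

/-- The `k`-th elementary symmetric polynomial of `μ : Fin n → ℝ`. -/
noncomputable def esymm {n : ℕ} (k : ℕ) (μ : Fin n → ℝ) : ℝ :=
  ∑ s ∈ Finset.powersetCard k (Finset.univ : Finset (Fin n)), ∏ i ∈ s, μ i

/-- The weighted elementary symmetric function
`σ_k^∞(μ₀, μ) = ∑_{j=0}^k (μ₀^j / j!) σ_{k-j}(μ)`. -/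
noncomputable def esymmInf {n : ℕ} (k : ℕ) (μ0 : ℝ) (μ : Fin n → ℝ) : ℝ :=
  ∑ j ∈ Finset.range (k + 1), μ0 ^ j / (Nat.factorial j) * esymm (k - j) μ

/-- The weighted Newton transformations: `T₀^∞ = I` and
`T_k^∞(μ₀, A) = σ_k^∞(μ₀, μ) I − A T_{k-1}^∞(μ₀, A)`, where `μ` are the eigenvalues of `A`. -/
noncomputable def newtonInf {n : ℕ} (μ0 : ℝ) (μ : Fin n → ℝ)
    (A : Matrix (Fin n) (Fin n) ℝ) : ℕ → Matrix (Fin n) (Fin n) ℝ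
  | 0 => 1
  | (k + 1) => esymmInf (k + 1) μ0 μ • (1 : Matrix (Fin n) (Fin n) ℝ) - A * newtonInf μ0 μ A k

/-- Elementary symmetric polynomial of `μ` with index `i` removed. -/
noncomputable def esymmE {n : ℕ} (k : ℕ) (μ : Fin n → ℝ) (i : Fin n) : ℝ :=
  ∑ s ∈ Finset.powersetCard k ((Finset.univ : Finset (Fin n)).erase i), ∏ j ∈ s, μ j

lemma esymmE_zero {n : ℕ} (μ : Fin n → ℝ) (i : Fin n) : esymmE 0 μ i = 1 := by
  simp [esymmE]

lemma esymm_succ {n : ℕ} (k : ℕ) (μ : Fin n → ℝ) (i : Fin n) :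
    esymm (k + 1) μ = esymmE (k + 1) μ i + μ i * esymmE k μ i := by
  classical
  have h : (Finset.univ : Finset (Fin n)) = insert i (Finset.univ.erase i) := by
    rw [Finset.insert_erase (Finset.mem_univ i)]
  rw [esymm, h, Finset.powersetCard_succ_insert (Finset.notMem_erase i _)]
  rw [Finset.sum_union]
  · congr 1
    rw [Finset.sum_image]
    · rw [esymmE, Finset.mul_sum]
      refine Finset.sum_congr rfl fun s hs => ?_
      have hi : i ∉ s := fun hmem =>
        Finset.notMem_erase i _ ((Finset.mem_powersetCard.1 hs).1 hmem)
      rw [Finset.prod_insert hi]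
    · intro s hs t ht hst
      have hi : i ∉ s := fun hmem =>
        Finset.notMem_erase i _ ((Finset.mem_powersetCard.1 hs).1 hmem)
      have hi' : i ∉ t := fun hmem =>
        Finset.notMem_erase i _ ((Finset.mem_powersetCard.1 ht).1 hmem)
      have := congrArg (Finset.erase · i) hst
      simpa [Finset.erase_insert, hi, hi'] using this
  · rw [Finset.disjoint_right]
    intro s hs
    simp only [Finset.mem_image] at hs
    obtain ⟨t, _, rfl⟩ := hs
    intro hmem
    exact Finset.notMem_erase i _
      ((Finset.mem_powersetCard.1 hmem).1 (Finset.mem_insert_self i t))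

lemma sum_esymmE {n : ℕ} (k : ℕ) (μ : Fin n → ℝ) :
    ∑ i, esymmE k μ i = ((n : ℝ) - k) * esymm k μ := by
  classical
  by_cases hkn : k ≤ n
  · have key : ∀ i : Fin n, esymmE k μ i =
        ∑ s ∈ Finset.powersetCard k (Finset.univ : Finset (Fin n)),
          (if i ∉ s then ∏ j ∈ s, μ j else 0) := by
      intro i
      rw [esymmE, ← Finset.sum_filter]
      congr 1
      ext s
      simp only [Finset.mem_filter, Finset.mem_powersetCard, Finset.subset_erase,
        Finset.subset_univ, true_and]
      tauto
    simp_rw [key]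
    rw [Finset.sum_comm]
    rw [esymm, Finset.mul_sum]
    refine Finset.sum_congr rfl fun s hs => ?_
    rw [Finset.sum_ite, Finset.sum_const, Finset.sum_const_zero, add_zero]
    have hcard : (Finset.univ.filter (fun x => x ∉ s)).card = n - k := by
      have hs' := Finset.mem_powersetCard.1 hs
      rw [Finset.filter_not, Finset.card_sdiff_of_subset (by simp [hs'.1])]
      simp [Finset.filter_true_of_mem (fun x hx => hs'.1 hx), hs'.2]
    rw [hcard, nsmul_eq_mul]
    congr 1
    push_cast [Nat.cast_sub hkn]
    ring
  · push_neg at hkn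
    have h1 : Finset.powersetCard k (Finset.univ : Finset (Fin n)) = ∅ := by
      rw [Finset.powersetCard_eq_empty]; simpa using hkn
    have h2 : ∀ i : Fin n, esymmE k μ i = 0 := by
      intro i
      rw [esymmE, Finset.powersetCard_eq_empty.2, Finset.sum_empty]
      have : ((Finset.univ : Finset (Fin n)).erase i).card ≤ n :=
        le_trans (Finset.card_erase_le) (by simp)
      omega
    simp [h2, esymm, h1]

/-- The weighted elementary symmetric function with index `i` removed. -/
noncomputable def esymmInfE {n : ℕ} (k : ℕ) (μ0 : ℝ) (μ : Fin n → ℝ) (i : Fin n) : ℝ :=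
  ∑ j ∈ Finset.range (k + 1), μ0 ^ j / (Nat.factorial j) * esymmE (k - j) μ i

lemma esymmInf_succ {n : ℕ} (k : ℕ) (μ0 : ℝ) (μ : Fin n → ℝ) (i : Fin n) :
    esymmInf (k + 1) μ0 μ = esymmInfE (k + 1) μ0 μ i + μ i * esymmInfE k μ0 μ i := by
  have h1 : ∀ j ∈ Finset.range (k + 1),
      μ0 ^ j / (Nat.factorial j) * esymm (k + 1 - j) μ =
        μ0 ^ j / (Nat.factorial j) * esymmE (k + 1 - j) μ i +
          μ i * (μ0 ^ j / (Nat.factorial j) * esymmE (k - j) μ i) := by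
    intro j hj
    have hjk : j ≤ k := Nat.lt_succ_iff.1 (Finset.mem_range.1 hj)
    have : k + 1 - j = (k - j) + 1 := by omega
    rw [this, esymm_succ (k - j) μ i]
    ring
  have L : esymmInf (k + 1) μ0 μ
      = ∑ j ∈ Finset.range (k + 1), μ0 ^ j / (Nat.factorial j) * esymm (k + 1 - j) μ
        + μ0 ^ (k + 1) / (Nat.factorial (k + 1)) * esymm 0 μ := by
    rw [esymmInf, Finset.sum_range_succ, Nat.sub_self]
  have R : esymmInfE (k + 1) μ0 μ i
      = ∑ j ∈ Finset.range (k + 1), μ0 ^ j / (Nat.factorial j) * esymmE (k + 1 - j) μ i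
        + μ0 ^ (k + 1) / (Nat.factorial (k + 1)) * esymmE 0 μ i := by
    rw [esymmInfE, Finset.sum_range_succ, Nat.sub_self]
  have e0 : esymm 0 μ = 1 := by simp [esymm]
  rw [L, R, Finset.sum_congr rfl h1, Finset.sum_add_distrib, esymmInfE, Finset.mul_sum,
    e0, esymmE_zero]
  ring

lemma newtonInf_diagonal {n : ℕ} (k : ℕ) (μ0 : ℝ) (μ : Fin n → ℝ) :
    newtonInf μ0 μ (Matrix.diagonal μ) k =
      Matrix.diagonal (fun i => esymmInfE k μ0 μ i) := by
  induction k with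
  | zero =>
    have : (fun i => esymmInfE 0 μ0 μ i) = fun _ : Fin n => (1 : ℝ) := by
      funext i; simp [esymmInfE, esymmE_zero]
    rw [newtonInf, this, Matrix.diagonal_one]
  | succ k ih =>
    rw [newtonInf, ih, Matrix.diagonal_mul_diagonal]
    ext i j
    rcases eq_or_ne i j with rfl | hij
    · simp only [Matrix.sub_apply, Matrix.smul_apply, Matrix.one_apply_eq,
        Matrix.diagonal_apply_eq, smul_eq_mul, mul_one]
      rw [esymmInf_succ k μ0 μ i]
      ring
    · simp [Matrix.sub_apply, Matrix.diagonal_apply_ne _ hij, Matrix.one_apply_ne hij]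

lemma newtonInf_conj {n : ℕ} (k : ℕ) (μ0 : ℝ) (μ : Fin n → ℝ)
    (U D : Matrix (Fin n) (Fin n) ℝ) (hU : U * star U = 1) (hU' : star U * U = 1) :
    newtonInf μ0 μ (U * D * star U) k = U * newtonInf μ0 μ D k * star U := by
  induction k with
  | zero => rw [newtonInf, newtonInf, mul_one, hU]
  | succ k ih =>
    rw [newtonInf, newtonInf, ih]
    have h1 : U * D * star U * (U * newtonInf μ0 μ D k * star U)
        = U * (D * newtonInf μ0 μ D k) * star U := by
      rw [show U * D * star U * (U * newtonInf μ0 μ D k * star U)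
          = U * D * (star U * U) * newtonInf μ0 μ D k * star U by
        noncomm_ring]
      rw [hU']
      noncomm_ring
    rw [h1, Matrix.mul_sub, Matrix.sub_mul]
    congr 1
    rw [Matrix.mul_smul, Matrix.smul_mul, mul_one, hU]

/-- `trace(T_k^∞(μ₀, A)) = (n−k) σ_k^∞(μ₀, μ) + μ₀ σ_{k−1}^∞(μ₀, μ)` for a symmetric `n×n`
matrix `A` with eigenvalues `μ`. -/
theorem trace_newtonInf {n : ℕ} (k : ℕ) (hk : 1 ≤ k) (μ0 : ℝ)
    {A : Matrix (Fin n) (Fin n) ℝ} (hA : A.IsHermitian) :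
    (newtonInf μ0 hA.eigenvalues A k).trace =
      ((n : ℝ) - k) * esymmInf k μ0 hA.eigenvalues +
        μ0 * esymmInf (k - 1) μ0 hA.eigenvalues := by
  classical
  set μ := hA.eigenvalues with hμ
  set U : Matrix (Fin n) (Fin n) ℝ :=
    (Matrix.IsHermitian.eigenvectorUnitary hA : Matrix (Fin n) (Fin n) ℝ)
  have hU : U * star U = 1 :=
    (Matrix.mem_unitaryGroup_iff).mp (Matrix.IsHermitian.eigenvectorUnitary hA).2
  have hU' : star U * U = 1 :=
    (Matrix.mem_unitaryGroup_iff').mp (Matrix.IsHermitian.eigenvectorUnitary hA).2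
  have hspec : A = U * Matrix.diagonal μ * star U := by
    have := hA.spectral_theorem
    simpa using this
  have htr : (newtonInf μ0 μ A k).trace = ∑ i, esymmInfE k μ0 μ i := by
    rw [hspec, newtonInf_conj k μ0 μ U (Matrix.diagonal μ) hU hU',
      Matrix.trace_mul_cycle, hU', one_mul, newtonInf_diagonal,
      Matrix.trace_diagonal]
  rw [htr]
  obtain ⟨m, rfl⟩ : ∃ m, k = m + 1 := ⟨k - 1, by omega⟩
  simp only [Nat.add_sub_cancel]
  rw [show (∑ i, esymmInfE (m + 1) μ0 μ i)
      = ∑ j ∈ Finset.range (m + 2), μ0 ^ j / (Nat.factorial j) *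
          (((n : ℝ) - (m + 1 - j : ℕ)) * esymm (m + 1 - j) μ) by
    simp only [esymmInfE]
    rw [Finset.sum_comm]
    refine Finset.sum_congr rfl fun j hj => ?_
    rw [← Finset.mul_sum, sum_esymmE]]
  have split : ∀ j ∈ Finset.range (m + 2),
      μ0 ^ j / (Nat.factorial j) * (((n : ℝ) - (m + 1 - j : ℕ)) * esymm (m + 1 - j) μ)
        = ((n : ℝ) - (m + 1)) * (μ0 ^ j / (Nat.factorial j) * esymm (m + 1 - j) μ)
          + (j : ℝ) * (μ0 ^ j / (Nat.factorial j)) * esymm (m + 1 - j) μ := by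
    intro j hj
    have hj' : j ≤ m + 1 := by
      have := Finset.mem_range.1 hj; omega
    have hcast : ((m + 1 - j : ℕ) : ℝ) = ((m : ℝ) + 1) - j := by
      push_cast [Nat.cast_sub hj']
      ring
    rw [hcast]
    ring
  rw [Finset.sum_congr rfl split, Finset.sum_add_distrib, ← Finset.mul_sum]
  congr 1
  · rw [esymmInf]
    push_cast
    ring
  · rw [Finset.sum_range_succ']
    simp only [Nat.cast_zero, zero_mul, zero_mul, add_zero]
    rw [esymmInf, Finset.mul_sum]
    refine Finset.sum_congr rfl fun j hj => ?_
    have h1 : m + 1 - (j + 1) = m - j := by omega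
    rw [h1, Nat.factorial_succ]
    have h2 : ((j + 1 : ℕ) : ℝ) ≠ 0 := by positivity
    have h3 : ((Nat.factorial j : ℕ) : ℝ) ≠ 0 := by
      exact_mod_cast Nat.factorial_ne_zero j
    push_cast
    field_simp
    ring
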